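/- Let ω > 0, let K, K*, n be positive integers with K ≤ K* and n > 2K*, let x_i = 2π(i−1)/(ωn) for i = 1,…,n, and let β* ∈ ℝ^{2K*+1}. Then the function B ↦ ∑_{i=1}^n ( f_{K*}(x_i)ᵀβ* − f_K(x_i)ᵀB )² on ℝ^{2K+1} attains its minimum exactly at the truncation B̂ of β*, where B̂_j = β*_j for 0 ≤ j ≤ 2K; that is, B̂ is a minimizer, and any minimizer equals B̂. -/

import Mathlib

/-!
On the equispaced grid `ω xᵢ = 2π(i-1)/n` the columns `cos (k ω x - φ)` of the design (with
phase `φ ∈ {0, π/2}`) are orthogonal as long as all frequencies satisfy `2k < n`: products of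
two columns become sums of cosines at frequencies `k ± l`, and `∑ᵢ cos (2π m i/n - φ)` vanishes
unless `n ∣ m`. For an orthogonal design, the least squares objective is a weighted sum of
squared coefficient errors, so the regressors left out of the fit only contribute a constant and
the included ones are fitted exactly.
-/

open Real Finset

/-- The order-`K` trigonometric regression design vector at time `x` with frequency `ω`:
component `0` is `1`, component `2k-1` is `sin (k ω x)`, component `2k` is `cos (k ω x)`. -/
noncomputable def designVec (K : ℕ) (ω x : ℝ) : Fin (2 * K + 1) → ℝ := fun j =>
  if j.val = 0 then 1
  else if j.val % 2 = 1 then Real.sin ((((j.val + 1) / 2 : ℕ) : ℝ) * ω * x)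
  else Real.cos (((j.val / 2 : ℕ) : ℝ) * ω * x)

theorem geom_sum_eq_ite_of_pow_eq_one {K : Type*} [Field K] [DecidableEq K] {ζ : K} {n : ℕ}
    (h : ζ ^ n = 1) : ∑ i ∈ range n, ζ ^ i = if ζ = 1 then (n : K) else 0 := by
  split_ifs with hζ
  · simp [hζ]
  · have hmul := geom_sum_mul ζ n
    rw [h, sub_self] at hmul
    exact (mul_eq_zero.1 hmul).resolve_right (sub_ne_zero.2 hζ)

theorem sum_cos_two_pi_mul_div_sub {n : ℕ} (hn : n ≠ 0) (m : ℤ) (φ : ℝ) :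
    ∑ i ∈ range n, cos (2 * π * m * i / n - φ) = if (n : ℤ) ∣ m then n * cos φ else 0 := by
  have hξ := Complex.isPrimitiveRoot_exp n hn
  have hterm : ∀ i : ℕ, cos (2 * π * m * i / n - φ) =
      (Complex.exp (-φ * Complex.I) * (Complex.exp (2 * π * Complex.I / n) ^ m) ^ i).re := by
    intro i
    rw [← zpow_natCast, ← zpow_mul, ← Complex.exp_int_mul, ← Complex.exp_add,
      ← Complex.exp_ofReal_mul_I_re]
    congr 3
    push_cast
    ring
  have hζn : (Complex.exp (2 * π * Complex.I / n) ^ m) ^ n = 1 := by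
    rw [← zpow_natCast, ← zpow_mul, mul_comm m, zpow_mul, zpow_natCast, hξ.pow_eq_one, one_zpow]
  simp_rw [hterm, ← Complex.re_sum, ← mul_sum, geom_sum_eq_ite_of_pow_eq_one hζn,
    hξ.zpow_eq_one_iff_dvd]
  split_ifs
  · rw [← Complex.ofReal_natCast, Complex.re_mul_ofReal, ← Complex.ofReal_neg,
      Complex.exp_ofReal_mul_I_re, cos_neg, mul_comm]
  · simp

theorem sum_cos_mul_cos_two_pi_mul_div {n : ℕ} (hn : n ≠ 0) (k l : ℤ) (φ ψ : ℝ) :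
    ∑ i ∈ range n, cos (2 * π * k * i / n - φ) * cos (2 * π * l * i / n - ψ) =
      ((if (n : ℤ) ∣ k - l then n * cos (φ - ψ) else 0) +
        (if (n : ℤ) ∣ k + l then n * cos (φ + ψ) else 0)) / 2 := by
  have hterm : ∀ i : ℕ, cos (2 * π * k * i / n - φ) * cos (2 * π * l * i / n - ψ) =
      (cos (2 * π * ((k - l : ℤ) : ℝ) * i / n - (φ - ψ)) +
        cos (2 * π * ((k + l : ℤ) : ℝ) * i / n - (φ + ψ))) / 2 := by
    intro i
    have product_to_sum (a b : ℝ) : cos a * cos b = (cos (a - b) + cos (a + b)) / 2 := by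
      rw [cos_sub, cos_add]; ring
    rw [product_to_sum]
    congr 3 <;> push_cast <;> ring
  rw [sum_congr rfl fun i _ => hterm i, ← sum_div, sum_add_distrib,
    sum_cos_two_pi_mul_div_sub hn, sum_cos_two_pi_mul_div_sub hn]

section OrthogonalDesign

variable {α ι κ : Type*} [Fintype ι] [Fintype κ] [DecidableEq κ] {s : Finset α} {G : α → κ → ℝ}
  {d : κ → ℝ}

theorem sum_sq_of_orthogonal (hG : ∀ k k', ∑ i ∈ s, G i k * G i k' = if k = k' then d k else 0)
    (c : κ → ℝ) : ∑ i ∈ s, (∑ k, G i k * c k) ^ 2 = ∑ k, d k * c k ^ 2 := by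
  calc ∑ i ∈ s, (∑ k, G i k * c k) ^ 2
      = ∑ k, ∑ k', c k * c k' * ∑ i ∈ s, G i k * G i k' := by
        simp_rw [sq, sum_mul_sum, mul_sum]
        rw [sum_comm]
        refine sum_congr rfl fun k _ => ?_
        rw [sum_comm]
        exact sum_congr rfl fun k' _ => sum_congr rfl fun i _ => by ring
    _ = ∑ k, d k * c k ^ 2 := by
        simp_rw [hG, mul_ite, mul_zero, sum_ite_eq, mem_univ, if_true]
        exact sum_congr rfl fun k _ => by ring

theorem sum_sq_sub_eq_of_orthogonal
    (hG : ∀ k k', ∑ i ∈ s, G i k * G i k' = if k = k' then d k else 0)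
    (e : ι ↪ κ) (β : κ → ℝ) (B : ι → ℝ) :
    ∑ i ∈ s, (∑ k, G i k * β k - ∑ j, G i (e j) * B j) ^ 2 =
      ∑ k ∈ (univ.map e)ᶜ, d k * β k ^ 2 + ∑ j, d (e j) * (β (e j) - B j) ^ 2 := by
  set c := β - Function.extend e B 0
  have hc_range (j : ι) : c (e j) = β (e j) - B j := by
    simp only [c, Pi.sub_apply, e.injective.extend_apply]
  have hc_compl (k : κ) (hk : k ∉ univ.map e) : c k = β k := by
    have hk' : ¬∃ j, e j = k := by simpa using hk
    simp only [c, Pi.sub_apply, Function.extend_apply' _ _ _ hk', Pi.zero_apply, sub_zero]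
  have hresidual (i : α) : ∑ k, G i k * β k - ∑ j, G i (e j) * B j = ∑ k, G i k * c k := by
    rw [Fintype.sum_of_injective e e.injective _ (fun k => G i k * Function.extend e B 0 k)
      (fun k hk => by rw [Function.extend_apply' _ _ _ hk, Pi.zero_apply, mul_zero])
      (fun j => by rw [e.injective.extend_apply])]
    simp only [c, Pi.sub_apply, mul_sub, sum_sub_distrib]
  simp_rw [hresidual]
  rw [sum_sq_of_orthogonal hG, ← sum_add_sum_compl (univ.map e), sum_map, add_comm]
  congr 1
  · exact sum_congr rfl fun k hk => by rw [hc_compl k (mem_compl.1 hk)]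
  · exact sum_congr rfl fun j _ => by rw [hc_range]

end OrthogonalDesign

def designFreq (j : ℕ) : ℕ := (j + 1) / 2

noncomputable def designPhase (j : ℕ) : ℝ := if j % 2 = 1 then π / 2 else 0

theorem designVec_eq_cos (K : ℕ) (ω x : ℝ) (j : Fin (2 * K + 1)) :
    designVec K ω x j = cos (designFreq j * ω * x - designPhase j) := by
  unfold designVec designFreq designPhase
  split_ifs with h0 h1 h1
  · omega
  · simp [h0]
  · rw [cos_sub_pi_div_two]
  · rw [sub_zero, show (j : ℕ) / 2 = ((j : ℕ) + 1) / 2 by omega]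

noncomputable def designWeight (n j : ℕ) : ℝ := if j = 0 then n else n / 2

theorem sum_designVec_mul_designVec {K n : ℕ} (hn : 2 * K < n) {ω : ℝ} (hω : ω ≠ 0)
    (j j' : Fin (2 * K + 1)) :
    ∑ i : Fin n,
        designVec K ω (2 * π * i / (ω * n)) j * designVec K ω (2 * π * i / (ω * n)) j' =
      if j = j' then designWeight n j else 0 := by
  have hn0 : n ≠ 0 := by omega
  have harg (m i : ℕ) :
      (m : ℝ) * ω * (2 * π * i / (ω * n)) = 2 * π * ((m : ℤ) : ℝ) * i / n := by
    push_cast; field_simp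
  simp_rw [designVec_eq_cos, harg]
  rw [Fin.sum_univ_eq_sum_range
      (fun i => cos (2 * π * ((designFreq j : ℤ) : ℝ) * i / n - designPhase j) *
        cos (2 * π * ((designFreq j' : ℤ) : ℝ) * i / n - designPhase j')),
    sum_cos_mul_cos_two_pi_mul_div hn0]
  have hk : designFreq j ≤ K := by unfold designFreq; omega
  have hl : designFreq j' ≤ K := by unfold designFreq; omega
  have dvd_iff {x : ℤ} (hx : |x| < n) : (n : ℤ) ∣ x ↔ x = 0 :=
    ⟨fun h => Int.eq_zero_of_abs_lt_dvd h hx, fun h => h ▸ dvd_zero _⟩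
  have hsub := dvd_iff (x := designFreq j - designFreq j') (by rw [abs_lt]; omega)
  have hadd := dvd_iff (x := designFreq j + designFreq j') (by rw [abs_lt]; omega)
  simp only [hsub, hadd]
  unfold designWeight designPhase designFreq at *
  rcases eq_or_ne j j' with rfl | hjj
  · split_ifs <;> simp <;> omega
  · -- two distinct columns of equal frequency are its sine and cosine, with phases `π/2` apart
    have : (j : ℕ) ≠ j' := Fin.val_ne_of_ne hjj
    split_ifs <;> simp_all <;> omega

theorem designVec_castLE {K K' : ℕ} (h : 2 * K + 1 ≤ 2 * K' + 1) (ω x : ℝ)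
    (j : Fin (2 * K + 1)) :
    designVec K ω x j = designVec K' ω x (Fin.castLE h j) :=
  rfl

theorem designWeight_pos {n : ℕ} (hn : n ≠ 0) (j : ℕ) : 0 < designWeight n j := by
  unfold designWeight
  have : (0 : ℝ) < n := by positivity
  split_ifs <;> positivity

theorem eq_of_sum_mul_sq_sub_nonpos {ι : Type*} [Fintype ι] {w a b : ι → ℝ} (hw : ∀ j, 0 < w j)
    (h : ∑ j, w j * (a j - b j) ^ 2 ≤ 0) : b = a := by
  have hnonneg : 0 ≤ fun j => w j * (a j - b j) ^ 2 := fun j => by have := hw j; positivity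
  have hzero := (Fintype.sum_eq_zero_iff_of_nonneg hnonneg).1
    (le_antisymm h (sum_nonneg fun j _ => hnonneg j))
  funext j
  have hj := congrFun hzero j
  simp only [Pi.zero_apply, mul_eq_zero, (hw j).ne', false_or, pow_eq_zero_iff two_ne_zero,
    sub_eq_zero] at hj
  exact hj.symm

/-- Under the equispaced design with `n > 2K*` and `K ≤ K*`, the underspecified least
squares objective `B ↦ ∑ᵢ (f_{K*}(xᵢ)ᵀβ* − f_K(xᵢ)ᵀB)²` attains its minimum exactly at
the truncation of `β*` to its first `2K+1` coordinates. -/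
theorem underspecified_least_squares_truncation (ω : ℝ) (hω : 0 < ω) (K Kstar n : ℕ)
    (hKK : K ≤ Kstar) (hn : 2 * Kstar < n)
    (x : Fin n → ℝ) (hx : ∀ i : Fin n, x i = 2 * π * i / (ω * n))
    (βstar : Fin (2 * Kstar + 1) → ℝ)
    (L : (Fin (2 * K + 1) → ℝ) → ℝ)
    (hL : ∀ B : Fin (2 * K + 1) → ℝ,
      L B = ∑ i : Fin n,
        ((∑ j' : Fin (2 * Kstar + 1), designVec Kstar ω (x i) j' * βstar j') -
          (∑ j : Fin (2 * K + 1), designVec K ω (x i) j * B j)) ^ 2)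
    (Bhat : Fin (2 * K + 1) → ℝ)
    (hBhat : ∀ j : Fin (2 * K + 1), Bhat j = βstar (Fin.castLE (by omega) j)) :
    (∀ B : Fin (2 * K + 1) → ℝ, L Bhat ≤ L B) ∧
    (∀ B : Fin (2 * K + 1) → ℝ, (∀ B' : Fin (2 * K + 1) → ℝ, L B ≤ L B') → B = Bhat) := by
  have hcast : 2 * K + 1 ≤ 2 * Kstar + 1 := by omega
  have hgram (k k' : Fin (2 * Kstar + 1)) : ∑ i : Fin n, designVec Kstar ω (x i) k *
      designVec Kstar ω (x i) k' = if k = k' then designWeight n k else 0 := by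
    simpa only [hx] using sum_designVec_mul_designVec hn hω.ne' k k'
  set C := ∑ k ∈ (univ.map (Fin.castLEEmb hcast))ᶜ, designWeight n k * βstar k ^ 2
  have hLB (B : Fin (2 * K + 1) → ℝ) :
      L B = C + ∑ j : Fin (2 * K + 1), designWeight n j * (Bhat j - B j) ^ 2 := by
    simp only [hL, designVec_castLE hcast, hBhat]
    exact sum_sq_sub_eq_of_orthogonal hgram (Fin.castLEEmb hcast) βstar B
  have hLBhat : L Bhat = C := by simp [hLB]
  have hweight (j : Fin (2 * K + 1)) : 0 < designWeight n j := designWeight_pos (by omega) j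
  refine ⟨fun B => ?_, fun B hB => eq_of_sum_mul_sq_sub_nonpos hweight ?_⟩
  · rw [hLBhat, hLB]
    exact le_add_of_nonneg_right (sum_nonneg fun j _ => by have := hweight j; positivity)
  · linarith [hB Bhat, hLB B]
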